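/- arXiv:2502.04160 — 7 statements merged into one kernel-verified Lean document; each statement's English description precedes it below -/
import Mathlib

section
/- Let α, β, γ, δ > 0 and let m1, m2 : [0,∞) → ℝ be differentiable functions with m1(t) > 0 and m2(t) > 0 for all t ≥ 0, solving the Lotka–Volterra system m1'(t) = α m1(t) − β m1(t) m2(t), m2'(t) = −δ m2(t) + γ m1(t) m2(t). Then there exist constants 0 < c̲1 ≤ c̄1 and 0 < c̲2 ≤ c̄2 such that c̲1 ≤ m1(t) ≤ c̄1 and c̲2 ≤ m2(t) ≤ c̄2 for all t ≥ 0. -/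
/-! `γ x - δ log x + β y - α log y` is a first integral of the Lotka–Volterra system. Both of its
summands have the form `a X - b log X` with `a, b > 0`, which is bounded below and tends to `+∞` as
`X → 0⁺` and as `X → ∞`. Along a positive solution each summand is therefore bounded above, and this
traps the corresponding component in a compact subinterval of `(0, ∞)`. -/

open Real

lemma log_le_mul_sub_one_sub_log {x c : ℝ} (hx : 0 < x) (hc : 0 < c) :
    log x ≤ c * x - 1 - log c := by
  have h := log_le_sub_one_of_pos (mul_pos hc hx)
  rw [log_mul hc.ne' hx.ne'] at h
  linarith

/-- The minimum of `a x - b log x` is attained at `x = b / a`. -/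
lemma add_mul_log_div_le_mul_sub_mul_log {a b x : ℝ} (ha : 0 < a) (hb : 0 < b) (hx : 0 < x) :
    b + b * log (a / b) ≤ a * x - b * log x := by
  have h := mul_le_mul_of_nonneg_left (log_le_mul_sub_one_sub_log hx (div_pos ha hb)) hb.le
  have hab : b * (a / b * x) = a * x := by field_simp
  linarith

lemma exists_bounds_of_mul_sub_mul_log_le {a b : ℝ} (ha : 0 < a) (hb : 0 < b) (K : ℝ) :
    ∃ l u : ℝ, 0 < l ∧ ∀ x, 0 < x → a * x - b * log x ≤ K → l ≤ x ∧ x ≤ u := by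
  refine ⟨exp (-K / b), 2 * (K - b - b * log (a / 2 / b)) / a, exp_pos _,
    fun x hx hK => ⟨?_, ?_⟩⟩
  · have hlog : -K / b ≤ log x := by
      rw [div_le_iff₀ hb]
      nlinarith [mul_pos ha hx]
    calc exp (-K / b) ≤ exp (log x) := exp_le_exp.2 hlog
      _ = x := exp_log hx
  · -- split `a x` as `a x / 2 + a x / 2` and bound `a x / 2 - b log x` below by its minimum
    have hmin := add_mul_log_div_le_mul_sub_mul_log (half_pos ha) hb hx
    rw [le_div_iff₀ ha]
    linarith

noncomputable def lotkaVolterraIntegral (α β γ δ x y : ℝ) : ℝ :=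
  γ * x - δ * log x + (β * y - α * log y)

theorem hasDerivAt_lotkaVolterraIntegral {α β γ δ : ℝ} {m1 m2 : ℝ → ℝ} {t : ℝ}
    (h1 : m1 t ≠ 0) (h2 : m2 t ≠ 0)
    (hm1 : HasDerivAt m1 (α * m1 t - β * m1 t * m2 t) t)
    (hm2 : HasDerivAt m2 (-(δ * m2 t) + γ * m1 t * m2 t) t) :
    HasDerivAt (fun s => lotkaVolterraIntegral α β γ δ (m1 s) (m2 s)) 0 t := by
  refine (((hm1.const_mul γ).sub ((hm1.log h1).const_mul δ)).add
    ((hm2.const_mul β).sub ((hm2.log h2).const_mul α))).congr_deriv ?_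
  field_simp
  ring

theorem eq_of_hasDerivAt_zero_of_le {E : Type*} [NormedAddCommGroup E] [NormedSpace ℝ E]
    {f : ℝ → E} {a t : ℝ} (hf : ∀ s, a ≤ s → HasDerivAt f 0 s) (ht : a ≤ t) : f t = f a :=
  constant_of_has_deriv_right_zero (fun s hs => (hf s hs.1).continuousAt.continuousWithinAt)
    (fun s hs => (hf s hs.1).hasDerivWithinAt) t ⟨ht, le_rfl⟩

/-- Positive solutions of the Lotka–Volterra system are bounded
from above and away from zero, uniformly in time. -/
theorem lotka_volterra_solutions_bounded
    (α β γ δ : ℝ) (hα : 0 < α) (hβ : 0 < β) (hγ : 0 < γ) (hδ : 0 < δ)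
    (m1 m2 : ℝ → ℝ)
    (hm1pos : ∀ t : ℝ, 0 ≤ t → 0 < m1 t) (hm2pos : ∀ t : ℝ, 0 ≤ t → 0 < m2 t)
    (hm1 : ∀ t : ℝ, 0 ≤ t → HasDerivAt m1 (α * m1 t - β * m1 t * m2 t) t)
    (hm2 : ∀ t : ℝ, 0 ≤ t → HasDerivAt m2 (-(δ * m2 t) + γ * m1 t * m2 t) t) :
    ∃ c1l c1u c2l c2u : ℝ, 0 < c1l ∧ c1l ≤ c1u ∧ 0 < c2l ∧ c2l ≤ c2u ∧
      ∀ t : ℝ, 0 ≤ t →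
        c1l ≤ m1 t ∧ m1 t ≤ c1u ∧ c2l ≤ m2 t ∧ m2 t ≤ c2u := by
  have hconserved : ∀ t, 0 ≤ t → lotkaVolterraIntegral α β γ δ (m1 t) (m2 t) =
      lotkaVolterraIntegral α β γ δ (m1 0) (m2 0) := fun t ht =>
    eq_of_hasDerivAt_zero_of_le (fun s hs => hasDerivAt_lotkaVolterraIntegral
      (hm1pos s hs).ne' (hm2pos s hs).ne' (hm1 s hs) (hm2 s hs)) ht
  generalize lotkaVolterraIntegral α β γ δ (m1 0) (m2 0) = V at hconserved
  obtain ⟨l1, u1, hl1, hbound1⟩ :=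
    exists_bounds_of_mul_sub_mul_log_le hγ hδ (V - (α + α * log (β / α)))
  obtain ⟨l2, u2, hl2, hbound2⟩ :=
    exists_bounds_of_mul_sub_mul_log_le hβ hα (V - (δ + δ * log (γ / δ)))
  have hbounds : ∀ t, 0 ≤ t → l1 ≤ m1 t ∧ m1 t ≤ u1 ∧ l2 ≤ m2 t ∧ m2 t ≤ u2 := by
    intro t ht
    have hVt := hconserved t ht
    rw [lotkaVolterraIntegral] at hVt
    have hmin1 := add_mul_log_div_le_mul_sub_mul_log hγ hδ (hm1pos t ht)
    have hmin2 := add_mul_log_div_le_mul_sub_mul_log hβ hα (hm2pos t ht)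
    obtain ⟨h1l, h1u⟩ := hbound1 _ (hm1pos t ht) (by linarith)
    obtain ⟨h2l, h2u⟩ := hbound2 _ (hm2pos t ht) (by linarith)
    exact ⟨h1l, h1u, h2l, h2u⟩
  obtain ⟨h1l, h1u, h2l, h2u⟩ := hbounds 0 le_rfl
  exact ⟨l1, u1, l2, u2, hl1, h1l.trans h1u, hl2, h2l.trans h2u, hbounds⟩
end

section
/- Let σ1, σ2 > 0, and let m1, m2 : [0,∞) → ℝ be continuous with 0 ≤ m1(t) ≤ c̄1 and 0 ≤ m2(t) ≤ c̄2 for all t. Assume there exist ζ1, ζ2 > 0 such that β m2(t) + α χ ≥ ζ1 and γ(μ − m1(t)) + ν θ ≥ ζ2 for all t ≥ 0. Let v1, v2 ≥ 0 at time 0 be differentiable solutions of v1' = −2(β m2 + αχ) v1 + σ1 m1 m2 and v2' = −2(γ(μ − m1) + νθ) v2 + σ2 m1 m2. Then for all t ≥ 0: v1(t) ≤ v1(0) e^{−2ζ1 t} + (σ1/(2ζ1)) c̄1 c̄2 (1 − e^{−2ζ1 t}) and v2(t) ≤ v2(0) e^{−2ζ2 t} + (σ2/(2ζ2)) c̄1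 c̄2 (1 − e^{−2ζ2 t}). -/
/-! A solution of `v' = -2 a v + b` with `a > 0` and `b ≥ 0` increases wherever it is negative,
so it stays nonnegative when `v 0 ≥ 0`. Then the damping `a ≥ ζ` gives the linear differential
inequality `v' ≤ -2 ζ v + K` with `K = σ c̄₁ c̄₂`, and Grönwall's inequality bounds `v` by the
solution of the equation `w' = -2 ζ w + K`, which is the claimed bound. -/

open Real Set

theorem nonneg_of_deriv_pos_of_neg {v v' : ℝ → ℝ} (hv0 : 0 ≤ v 0)
    (hv : ∀ t, 0 ≤ t → HasDerivAt v (v' t) t) (hpos : ∀ t, 0 ≤ t → v t < 0 → 0 < v' t) :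
    ∀ t, 0 ≤ t → 0 ≤ v t := by
  intro t ht
  refine le_of_forall_pos_le_add fun ε hε => ?_
  -- `-v` cannot cross the level `ε` upwards, since it is decreasing wherever it is positive.
  have hcross : -v t ≤ ε :=
    image_le_of_deriv_right_lt_deriv_boundary' (f := fun s => -v s) (B' := fun _ => 0)
      (fun s hs => (hv s hs.1).continuousAt.neg.continuousWithinAt)
      (fun s hs => (hv s hs.1).neg.hasDerivWithinAt) (by linarith) continuousOn_const
      (fun _ _ => hasDerivWithinAt_const _ _ _)
      (fun s hs hvs => neg_neg_of_pos (hpos s hs.1 (by linarith))) ⟨ht, le_rfl⟩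
  linarith

theorem nonneg_of_hasDerivAt_linear {a b v : ℝ → ℝ} (hv0 : 0 ≤ v 0)
    (ha : ∀ t, 0 ≤ t → 0 < a t) (hb : ∀ t, 0 ≤ t → 0 ≤ b t)
    (hv : ∀ t, 0 ≤ t → HasDerivAt v (-2 * a t * v t + b t) t) :
    ∀ t, 0 ≤ t → 0 ≤ v t :=
  nonneg_of_deriv_pos_of_neg hv0 hv fun t ht hvt => by
    nlinarith [mul_pos (ha t ht) (neg_pos.mpr hvt), hb t ht]

theorem le_of_hasDerivAt_linear {ζ K : ℝ} {a b v : ℝ → ℝ} (hζ : 0 < ζ) (hv0 : 0 ≤ v 0)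
    (ha : ∀ t, 0 ≤ t → ζ ≤ a t) (hb : ∀ t, 0 ≤ t → 0 ≤ b t ∧ b t ≤ K)
    (hv : ∀ t, 0 ≤ t → HasDerivAt v (-2 * a t * v t + b t) t) (t : ℝ) (ht : 0 ≤ t) :
    v t ≤ v 0 * exp (-2 * ζ * t) + K / (2 * ζ) * (1 - exp (-2 * ζ * t)) := by
  have hnonneg := nonneg_of_hasDerivAt_linear hv0 (fun s hs => hζ.trans_le (ha s hs))
    (fun s hs => (hb s hs).1) hv
  have hgronwall := le_gronwallBound_of_liminf_deriv_right_le (b := t) (K := -2 * ζ) (ε := K)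
    (f' := fun s => -2 * a s * v s + b s)
    (fun s hs => (hv s hs.1).continuousAt.continuousWithinAt)
    (fun s hs _ hr => (hv s hs.1).hasDerivWithinAt.liminf_right_slope_le hr) le_rfl
    (fun s hs => by
      nlinarith [mul_le_mul_of_nonneg_right (ha s hs.1) (hnonneg s hs.1), (hb s hs.1).2])
    t ⟨ht, le_rfl⟩
  rw [gronwallBound_of_K_ne_0 (by linarith), sub_zero] at hgronwall
  convert hgronwall using 2
  field_simp
  ring

theorem variance_system_global_bounds_general
    (α β γ ν σ1 σ2 μ χ θ c1u c2u ζ1 ζ2 : ℝ)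
    (hσ1 : 0 < σ1) (hσ2 : 0 < σ2)
    (m1 m2 v1 v2 : ℝ → ℝ)
    (hm1b : ∀ t : ℝ, 0 ≤ t → 0 ≤ m1 t ∧ m1 t ≤ c1u)
    (hm2b : ∀ t : ℝ, 0 ≤ t → 0 ≤ m2 t ∧ m2 t ≤ c2u)
    (hζ1 : 0 < ζ1) (hζ2 : 0 < ζ2)
    (hlb1 : ∀ t : ℝ, 0 ≤ t → ζ1 ≤ β * m2 t + α * χ)
    (hlb2 : ∀ t : ℝ, 0 ≤ t → ζ2 ≤ γ * (μ - m1 t) + ν * θ)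
    (hv10 : 0 ≤ v1 0) (hv20 : 0 ≤ v2 0)
    (hv1 : ∀ t : ℝ, 0 ≤ t →
      HasDerivAt v1 (-2 * (β * m2 t + α * χ) * v1 t + σ1 * m1 t * m2 t) t)
    (hv2 : ∀ t : ℝ, 0 ≤ t →
      HasDerivAt v2 (-2 * (γ * (μ - m1 t) + ν * θ) * v2 t + σ2 * m1 t * m2 t) t) :
    ∀ t : ℝ, 0 ≤ t →
      v1 t ≤ v1 0 * Real.exp (-2 * ζ1 * t) +
        σ1 / (2 * ζ1) * (c1u * c2u) * (1 - Real.exp (-2 * ζ1 * t)) ∧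
      v2 t ≤ v2 0 * Real.exp (-2 * ζ2 * t) +
        σ2 / (2 * ζ2) * (c1u * c2u) * (1 - Real.exp (-2 * ζ2 * t)) := by
  have hsource : ∀ σ, 0 < σ → ∀ t, 0 ≤ t →
      0 ≤ σ * m1 t * m2 t ∧ σ * m1 t * m2 t ≤ σ * (c1u * c2u) := by
    intro σ hσ t ht
    obtain ⟨hm1, hm1le⟩ := hm1b t ht
    obtain ⟨hm2, hm2le⟩ := hm2b t ht
    refine ⟨by positivity, ?_⟩
    rw [mul_assoc]
    exact mul_le_mul_of_nonneg_left (mul_le_mul hm1le hm2le hm2 (hm1.trans hm1le)) hσ.le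
  intro t ht
  rw [← mul_div_right_comm σ1, ← mul_div_right_comm σ2]
  exact ⟨le_of_hasDerivAt_linear hζ1 hv10 hlb1 (hsource σ1 hσ1) hv1 t ht,
    le_of_hasDerivAt_linear hζ2 hv20 hlb2 (hsource σ2 hσ2) hv2 t ht⟩

/-- Global-in-time L∞ bounds for the variances of the Fokker–Planck
system (case p = 1/2), under uniform lower bounds on the damping coefficients. -/
theorem variance_system_global_bounds
    (α β γ ν σ1 σ2 μ χ θ c1u c2u ζ1 ζ2 : ℝ)
    (hσ1 : 0 < σ1) (hσ2 : 0 < σ2)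
    (m1 m2 v1 v2 : ℝ → ℝ)
    (hm1c : ContinuousOn m1 (Set.Ici 0)) (hm2c : ContinuousOn m2 (Set.Ici 0))
    (hm1b : ∀ t : ℝ, 0 ≤ t → 0 ≤ m1 t ∧ m1 t ≤ c1u)
    (hm2b : ∀ t : ℝ, 0 ≤ t → 0 ≤ m2 t ∧ m2 t ≤ c2u)
    (hζ1 : 0 < ζ1) (hζ2 : 0 < ζ2)
    (hlb1 : ∀ t : ℝ, 0 ≤ t → ζ1 ≤ β * m2 t + α * χ)
    (hlb2 : ∀ t : ℝ, 0 ≤ t → ζ2 ≤ γ * (μ - m1 t) + ν * θ)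
    (hv10 : 0 ≤ v1 0) (hv20 : 0 ≤ v2 0)
    (hv1 : ∀ t : ℝ, 0 ≤ t →
      HasDerivAt v1 (-2 * (β * m2 t + α * χ) * v1 t + σ1 * m1 t * m2 t) t)
    (hv2 : ∀ t : ℝ, 0 ≤ t →
      HasDerivAt v2 (-2 * (γ * (μ - m1 t) + ν * θ) * v2 t + σ2 * m1 t * m2 t) t) :
    ∀ t : ℝ, 0 ≤ t →
      v1 t ≤ v1 0 * Real.exp (-2 * ζ1 * t) +
        σ1 / (2 * ζ1) * (c1u * c2u) * (1 - Real.exp (-2 * ζ1 * t)) ∧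
      v2 t ≤ v2 0 * Real.exp (-2 * ζ2 * t) +
        σ2 / (2 * ζ2) * (c1u * c2u) * (1 - Real.exp (-2 * ζ2 * t)) :=
  variance_system_global_bounds_general α β γ ν σ1 σ2 μ χ θ c1u c2u ζ1 ζ2 hσ1 hσ2 m1 m2 v1 v2 hm1b
    hm2b hζ1 hζ2 hlb1 hlb2 hv10 hv20 hv1 hv2
end

section
/- Let α, β, γ, δ, σ1 > 0, χ ∈ ℝ, and let m1, m2 : [0,∞) → ℝ be differentiable solutions of the Lotka–Volterra system m1' = α m1 − β m1 m2, m2' = −δ m2 + γ m1 m2 with m1(t) > 0 and m2(t) > 0 for all t ≥ 0. Let v1 be a differentiable solution of v1'(t) = −2(β m2(t) + α χ) v1(t) + σ1 m1(t) m2(t). Then for all t ≥ 0: v1(t) = (v1(0)/m1(0)²) m1(t)² e^{−2α(χ+1)t} + σ1 m1(t)² e^{−2α(χ+1)t} ∫₀ᵗ (m2(s)/m1(s)) e^{2α(χ+1)s} ds. -/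
/-!
Since `m1' = (α - β m2) m1`, the quotient `w = v1 / m1²` satisfies the constant-coefficient
linear equation `w' = -2α(χ + 1) w + σ1 m2 / m1`: the `β m2` terms of the two growth rates cancel.
Variation of constants for `w` then gives the formula after multiplying back by `m1(t)²`.
-/

open Real Set

theorem HasDerivAt.div_sq_of_linear {m v : ℝ → ℝ} {x ρ p q : ℝ}
    (hm : HasDerivAt m (ρ * m x) x) (hv : HasDerivAt v (p * v x + q) x) (hx : m x ≠ 0) :
    HasDerivAt (fun t => v t / m t ^ 2) ((p - 2 * ρ) * (v x / m x ^ 2) + q / m x ^ 2) x := by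
  refine (hv.fun_div (hm.fun_pow 2) (pow_ne_zero 2 hx)).congr_deriv ?_
  field_simp
  ring

theorem eq_exp_mul_add_integral_of_hasDerivAt {w g : ℝ → ℝ} {c T : ℝ}
    (hw : ∀ t ∈ uIcc 0 T, HasDerivAt w (-c * w t + g t) t)
    (hg : IntervalIntegrable g MeasureTheory.volume 0 T) :
    w T = exp (-c * T) * (w 0 + ∫ s in (0 : ℝ)..T, g s * exp (c * s)) := by
  have hF : ∀ t ∈ uIcc 0 T, HasDerivAt (fun s => w s * exp (c * s)) (g t * exp (c * t)) t := by
    intro t ht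
    refine ((hw t ht).fun_mul ((hasDerivAt_id' t).const_mul c).exp).congr_deriv ?_
    ring
  have hint : IntervalIntegrable (fun s => g s * exp (c * s)) MeasureTheory.volume 0 T :=
    hg.mul_continuousOn (by fun_prop)
  rw [intervalIntegral.integral_eq_sub_of_hasDerivAt hF hint, mul_zero, exp_zero, mul_one,
    add_sub_cancel, mul_left_comm, ← exp_add]
  simp

theorem hasDerivAt_prey_variance_div_sq {α β σ1 χ : ℝ} {m1 m2 v1 : ℝ → ℝ} {t : ℝ}
    (hm1 : HasDerivAt m1 (α * m1 t - β * m1 t * m2 t) t)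
    (hv1 : HasDerivAt v1 (-2 * (β * m2 t + α * χ) * v1 t + σ1 * m1 t * m2 t) t)
    (ht : m1 t ≠ 0) :
    HasDerivAt (fun s => v1 s / m1 s ^ 2)
      (-(2 * α * (χ + 1)) * (v1 t / m1 t ^ 2) + σ1 * (m2 t / m1 t)) t := by
  have hm1' : HasDerivAt m1 ((α - β * m2 t) * m1 t) t := hm1.congr_deriv (by ring)
  refine (hm1'.div_sq_of_linear hv1 ht).congr_deriv ?_
  field_simp
  ring

theorem prey_variance_sharp_representation_general
    (α β γ δ σ1 χ : ℝ)
    (m1 m2 v1 : ℝ → ℝ)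
    (hm1pos : ∀ t : ℝ, 0 ≤ t → 0 < m1 t)
    (hm1 : ∀ t : ℝ, 0 ≤ t → HasDerivAt m1 (α * m1 t - β * m1 t * m2 t) t)
    (hm2 : ∀ t : ℝ, 0 ≤ t → HasDerivAt m2 (-(δ * m2 t) + γ * m1 t * m2 t) t)
    (hv1 : ∀ t : ℝ, 0 ≤ t →
      HasDerivAt v1 (-2 * (β * m2 t + α * χ) * v1 t + σ1 * m1 t * m2 t) t) :
    ∀ t : ℝ, 0 ≤ t →
      v1 t = v1 0 / (m1 0) ^ 2 * (m1 t) ^ 2 * Real.exp (-2 * α * (χ + 1) * t) +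
        σ1 * (m1 t) ^ 2 * Real.exp (-2 * α * (χ + 1) * t) *
          ∫ s in (0:ℝ)..t, m2 s / m1 s * Real.exp (2 * α * (χ + 1) * s) := by
  intro T hT
  have hnonneg : ∀ t ∈ uIcc 0 T, 0 ≤ t := fun t ht => (uIcc_of_le hT ▸ ht).1
  have hw : ∀ t ∈ uIcc 0 T, HasDerivAt (fun s => v1 s / m1 s ^ 2)
      (-(2 * α * (χ + 1)) * (v1 t / m1 t ^ 2) + σ1 * (m2 t / m1 t)) t := fun t ht =>
    hasDerivAt_prey_variance_div_sq (hm1 t (hnonneg t ht)) (hv1 t (hnonneg t ht))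
      (hm1pos t (hnonneg t ht)).ne'
  have hg : ContinuousOn (fun s => σ1 * (m2 s / m1 s)) (uIcc 0 T) := fun t ht =>
    (continuousAt_const.mul ((hm2 t (hnonneg t ht)).continuousAt.div
      (hm1 t (hnonneg t ht)).continuousAt (hm1pos t (hnonneg t ht)).ne')).continuousWithinAt
  have hquot := eq_exp_mul_add_integral_of_hasDerivAt hw hg.intervalIntegrable
  simp only [mul_assoc σ1, intervalIntegral.integral_const_mul] at hquot
  rw [div_eq_iff (pow_ne_zero 2 (hm1pos T hT).ne')] at hquot
  rw [hquot, show -2 * α * (χ + 1) = -(2 * α * (χ + 1)) by ring]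
  ring

/-- Sharper explicit representation of the prey variance, obtained by
extracting the Lotka–Volterra mean `m1` from the Duhamel formula. -/
theorem prey_variance_sharp_representation
    (α β γ δ σ1 χ : ℝ)
    (hα : 0 < α) (hβ : 0 < β) (hγ : 0 < γ) (hδ : 0 < δ) (hσ1 : 0 < σ1)
    (m1 m2 v1 : ℝ → ℝ)
    (hm1pos : ∀ t : ℝ, 0 ≤ t → 0 < m1 t) (hm2pos : ∀ t : ℝ, 0 ≤ t → 0 < m2 t)
    (hm1 : ∀ t : ℝ, 0 ≤ t → HasDerivAt m1 (α * m1 t - β * m1 t * m2 t) t)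
    (hm2 : ∀ t : ℝ, 0 ≤ t → HasDerivAt m2 (-(δ * m2 t) + γ * m1 t * m2 t) t)
    (hv1 : ∀ t : ℝ, 0 ≤ t →
      HasDerivAt v1 (-2 * (β * m2 t + α * χ) * v1 t + σ1 * m1 t * m2 t) t) :
    ∀ t : ℝ, 0 ≤ t →
      v1 t = v1 0 / (m1 0) ^ 2 * (m1 t) ^ 2 * Real.exp (-2 * α * (χ + 1) * t) +
        σ1 * (m1 t) ^ 2 * Real.exp (-2 * α * (χ + 1) * t) *
          ∫ s in (0:ℝ)..t, m2 s / m1 s * Real.exp (2 * α * (χ + 1) * s) :=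
  prey_variance_sharp_representation_general α β γ δ σ1 χ m1 m2 v1 hm1pos hm1 hm2 hv1
end

section
/- Let 0 < p ≤ 1, s0 > 0, β ∈ (0,1), y ≥ 0, and let x ∈ ℝ satisfy x ≥ (1−p) s0. If η ∈ ℝ satisfies η ≥ −(1−β) ((1−p) s0)^{1−p}, then the post-interaction prey size x' = x − β (y/(1+y)) x + x^p η is nonnegative. -/
/-!
Since `x ≥ c := (1 - p) s0 ≥ 0` and `1 - p ≥ 0`, we have `x ^ p * c ^ (1 - p) ≤ x ^ p * x ^ (1 - p) = x`,
so the lower bound on `η` makes the random term cost at most `(1 - β) x`. The predation term costs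
at most `β x` because `y / (1 + y) ≤ 1`, and the two losses together do not exceed `x`.
-/

namespace Real

theorem rpow_mul_rpow_one_sub_le {c x p : ℝ} (hc : 0 ≤ c) (hcx : c ≤ x) (hp : p ≤ 1) :
    x ^ p * c ^ (1 - p) ≤ x := by
  have hx : 0 ≤ x := hc.trans hcx
  calc x ^ p * c ^ (1 - p) ≤ x ^ p * x ^ (1 - p) := by gcongr
    _ = x := by rw [← rpow_add' hx (by norm_num), add_sub_cancel, rpow_one]

theorem neg_mul_le_rpow_mul_of_neg_mul_rpow_one_sub_le {a c x p η : ℝ} (ha : 0 ≤ a) (hc : 0 ≤ c)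
    (hcx : c ≤ x) (hp : p ≤ 1) (hη : -(a * c ^ (1 - p)) ≤ η) :
    -(a * x) ≤ x ^ p * η :=
  calc -(a * x) ≤ -(a * (x ^ p * c ^ (1 - p))) := by
        gcongr
        exact rpow_mul_rpow_one_sub_le hc hcx hp
    _ = x ^ p * -(a * c ^ (1 - p)) := by ring
    _ ≤ x ^ p * η := mul_le_mul_of_nonneg_left hη (rpow_nonneg (hc.trans hcx) p)

end Real

theorem predation_loss_le {β y x : ℝ} (hβ : 0 ≤ β) (hy : 0 ≤ y) (hx : 0 ≤ x) :
    β * (y / (1 + y)) * x ≤ β * x := by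
  have hrate : y / (1 + y) ≤ 1 := by
    rw [div_le_one (by linarith)]
    linarith
  calc β * (y / (1 + y)) * x ≤ β * 1 * x := by gcongr
    _ = β * x := by ring

theorem post_interaction_prey_size_nonneg_general
    (p s0 β y x η : ℝ)
    (hp1 : p ≤ 1) (hs0 : 0 < s0)
    (hβ : 0 < β) (hβ1 : β < 1) (hy : 0 ≤ y)
    (hx : (1 - p) * s0 ≤ x)
    (hη : -((1 - β) * ((1 - p) * s0) ^ (1 - p)) ≤ η) :
    0 ≤ x - β * (y / (1 + y)) * x + x ^ p * η := by
  have hc : 0 ≤ (1 - p) * s0 := mul_nonneg (sub_nonneg.2 hp1) hs0.le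
  have hpredation := predation_loss_le hβ.le hy (hc.trans hx)
  have hnoise :=
    Real.neg_mul_le_rpow_mul_of_neg_mul_rpow_one_sub_le (sub_nonneg.2 hβ1.le) hc hx hp1 hη
  linarith

/-- Positivity of the post-interaction prey size in the binary
interaction rule, under the uniform lower bound on the random variable. -/
theorem post_interaction_prey_size_nonneg
    (p s0 β y x η : ℝ)
    (hp : 0 < p) (hp1 : p ≤ 1) (hs0 : 0 < s0)
    (hβ : 0 < β) (hβ1 : β < 1) (hy : 0 ≤ y)
    (hx : (1 - p) * s0 ≤ x)
    (hη : -((1 - β) * ((1 - p) * s0) ^ (1 - p)) ≤ η) :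
    0 ≤ x - β * (y / (1 + y)) * x + x ^ p * η :=
  post_interaction_prey_size_nonneg_general p s0 β y x η hp1 hs0 hβ hβ1 hy hx hη
end

section
/- Let α, β, γ, δ, K, ν > 0, μ ≥ 1 with δ = γμ − ν and γK > δ, and let χ, θ ∈ ℝ. Let m1, m2 : [0,∞) → ℝ satisfy 0 < c̲1 ≤ m1(t) ≤ c̄1 and 0 < c̲2 ≤ m2(t) ≤ c̄2, and assume β c̲2 + (α/K) c̲1 + αχ > 0 and γ(μ − c̄1) + νθ > 0. Define m1^eq(t) = α(χ+1) m1(t)/(β m2(t) + (α/K) m1(t) + αχ), m2^eq(t) = ν(θ+1) m2(t)/(γ(μ − m1(t)) + νθ), and m^∞ = (δ/γ, α(γK − δ)/(βγK)). Then for all t ≥ 0: max{|m1(t) − m1^eq(t)|, |m2(t) − m2^eq(t)|} ≤ ((βK + α)/(βK)) · max{β c̄1/(β c̲2 + (α/K) c̲1 + αχ), γ c̄2/(γ(μ − c̄1) + νθ)} · max{|m1(t) − δ/γ|, |m2(t) − α(γK−δ)/(βγK)|}. In particular, if (m1(t), m2(t)) → m^∞ as t → ∞, then max{|m1(t) − m1^eq(t)|,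 |m2(t) − m2^eq(t)|} → 0. -/
/-!
Write `e₁ = δ/γ`, `e₂ = α(γK - δ)/(βγK)` for the coexistence equilibrium. Each equilibrium
mean has the form `c x / D` with `x` the current mean, and `x - c x / D = x (D - c) / D`.
The numerators `D - c` vanish at the coexistence point and are linear in the deviation from it:
since `β e₂ + (α/K) e₁ = α`, the prey numerator is `β (m₂ - e₂) + (α/K)(m₁ - e₁)`, and since
`δ = γμ - ν`, the predator numerator is `-γ (m₁ - e₁)`. Bounding `x` above and `D` below by the
a priori bounds on the means gives the estimate, and the limit statement follows by squeezing.
-/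

open Filter Topology

lemma self_sub_mul_div_eq {𝕜 : Type*} [Field 𝕜] {x c D : 𝕜} (hD : D ≠ 0) : x - c * x / D = x * (D - c) / D := by
  field_simp

lemma abs_self_sub_mul_div_le {x c D X E d : ℝ} (hx : |x| ≤ X) (hE : |D - c| ≤ E)
    (hd : 0 < d) (hdD : d ≤ D) : |x - c * x / D| ≤ X * E / d := by
  have hD : 0 < D := hd.trans_le hdD
  rw [self_sub_mul_div_eq hD.ne', abs_div, abs_mul, abs_of_pos hD]
  exact div_le_div₀ (mul_nonneg ((abs_nonneg _).trans hx) ((abs_nonneg _).trans hE))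
    (mul_le_mul hx hE (abs_nonneg _) ((abs_nonneg _).trans hx)) hd hdD

lemma abs_mul_add_mul_le_mul_max {p q u v : ℝ} (hp : 0 ≤ p) (hq : 0 ≤ q) :
    |p * u + q * v| ≤ (p + q) * max |u| |v| :=
  calc |p * u + q * v| ≤ p * |u| + q * |v| := by
        simpa only [abs_mul, abs_of_nonneg hp, abs_of_nonneg hq] using abs_add_le (p * u) (q * v)
    _ ≤ p * max |u| |v| + q * max |u| |v| := by gcongr <;> simp
    _ = (p + q) * max |u| |v| := by ring

lemma tendsto_max_abs_sub_nhds_zero {ι : Type*} {l : Filter ι} {f g : ι → ℝ} {a b : ℝ}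
    (hf : Tendsto f l (𝓝 a)) (hg : Tendsto g l (𝓝 b)) :
    Tendsto (fun t => max |f t - a| |g t - b|) l (𝓝 0) := by
  simpa using ((hf.sub_const a).abs.max (hg.sub_const b).abs)

section LogisticLotkaVolterra

variable {α β γ δ K ν μ χ θ a b : ℝ}

lemma coexistence_prey_balance (hβ : β ≠ 0) (hγ : γ ≠ 0) (hK : K ≠ 0) :
    β * (α * (γ * K - δ) / (β * γ * K)) + α / K * (δ / γ) = α := by
  field_simp
  ring

lemma prey_denominator_sub_eq (hβ : β ≠ 0) (hγ : γ ≠ 0) (hK : K ≠ 0) :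
    β * b + α / K * a + α * χ - α * (χ + 1) =
      β * (b - α * (γ * K - δ) / (β * γ * K)) + α / K * (a - δ / γ) := by
  linear_combination coexistence_prey_balance (α := α) (δ := δ) hβ hγ hK

lemma predator_denominator_sub_eq (hγ : γ ≠ 0) (hδ : δ = γ * μ - ν) :
    γ * (μ - a) + ν * θ - ν * (θ + 1) = -(γ * (a - δ / γ)) := by
  rw [hδ]
  field_simp
  ring

lemma abs_prey_sub_gammaEq_le {c1l c1u c2l : ℝ} (hα : 0 < α) (hβ : 0 < β) (hγ : γ ≠ 0)
    (hK : 0 < K) (hc1l : 0 < c1l) (ha : c1l ≤ a ∧ a ≤ c1u) (hb : c2l ≤ b)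
    (hd : 0 < β * c2l + α / K * c1l + α * χ) :
    |a - α * (χ + 1) * a / (β * b + α / K * a + α * χ)| ≤
      (β * K + α) / (β * K) * (β * c1u / (β * c2l + α / K * c1l + α * χ)) *
        max |a - δ / γ| |b - α * (γ * K - δ) / (β * γ * K)| := by
  have hαK : 0 ≤ α / K := by positivity
  have hdD : β * c2l + α / K * c1l + α * χ ≤ β * b + α / K * a + α * χ := by
    gcongr; exact ha.1
  have hE := abs_mul_add_mul_le_mul_max (u := b - α * (γ * K - δ) / (β * γ * K))
    (v := a - δ / γ) hβ.le hαK
  rw [← prey_denominator_sub_eq hβ.ne' hγ hK.ne', max_comm] at hE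
  calc _ ≤ c1u * ((β + α / K) * max |a - δ / γ| |b - α * (γ * K - δ) / (β * γ * K)|) /
          (β * c2l + α / K * c1l + α * χ) :=
        abs_self_sub_mul_div_le (by rw [abs_of_pos (hc1l.trans_le ha.1)]; exact ha.2) hE hd hdD
    _ = _ := by field_simp

lemma abs_predator_sub_gammaEq_le {c1u c2l c2u : ℝ} (hγ : 0 < γ) (hδ : δ = γ * μ - ν)
    (ha : a ≤ c1u) (hc2l : 0 < c2l) (hb : c2l ≤ b ∧ b ≤ c2u)
    (hd : 0 < γ * (μ - c1u) + ν * θ) :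
    |b - ν * (θ + 1) * b / (γ * (μ - a) + ν * θ)| ≤
      γ * c2u / (γ * (μ - c1u) + ν * θ) * max |a - δ / γ| |b - α * (γ * K - δ) / (β * γ * K)| := by
  have hdD : γ * (μ - c1u) + ν * θ ≤ γ * (μ - a) + ν * θ := by gcongr
  have hE : |γ * (μ - a) + ν * θ - ν * (θ + 1)| ≤
      γ * max |a - δ / γ| |b - α * (γ * K - δ) / (β * γ * K)| := by
    rw [predator_denominator_sub_eq hγ.ne' hδ, abs_neg, abs_mul, abs_of_pos hγ]
    gcongr
    exact le_max_left _ _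
  calc _ ≤ c2u * (γ * max |a - δ / γ| |b - α * (γ * K - δ) / (β * γ * K)|) /
          (γ * (μ - c1u) + ν * θ) :=
        abs_self_sub_mul_div_le (by rw [abs_of_pos (hc2l.trans_le hb.1)]; exact hb.2) hE hd hdD
    _ = _ := by ring

lemma max_abs_sub_gammaEq_le {c1l c1u c2l c2u : ℝ} (hα : 0 < α) (hβ : 0 < β) (hγ : 0 < γ)
    (hK : 0 < K) (hδ : δ = γ * μ - ν) (hc1l : 0 < c1l) (hc2l : 0 < c2l)
    (ha : c1l ≤ a ∧ a ≤ c1u) (hb : c2l ≤ b ∧ b ≤ c2u)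
    (hd1 : 0 < β * c2l + α / K * c1l + α * χ) (hd2 : 0 < γ * (μ - c1u) + ν * θ) :
    max |a - α * (χ + 1) * a / (β * b + α / K * a + α * χ)|
        |b - ν * (θ + 1) * b / (γ * (μ - a) + ν * θ)| ≤
      (β * K + α) / (β * K) *
        max (β * c1u / (β * c2l + α / K * c1l + α * χ)) (γ * c2u / (γ * (μ - c1u) + ν * θ)) *
        max |a - δ / γ| |b - α * (γ * K - δ) / (β * γ * K)| := by
  have hC : 1 ≤ (β * K + α) / (β * K) := by
    rw [one_le_div (by positivity)]; linarith
  have hQ : 0 ≤ γ * c2u / (γ * (μ - c1u) + ν * θ) :=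
    div_nonneg (mul_nonneg hγ.le (hc2l.le.trans (hb.1.trans hb.2))) hd2.le
  refine max_le ((abs_prey_sub_gammaEq_le (δ := δ) hα hβ hγ.ne' hK hc1l ha hb.1 hd1).trans ?_)
    ((abs_predator_sub_gammaEq_le (α := α) (β := β) (K := K) hγ hδ ha.2 hc2l hb hd2).trans ?_)
  · gcongr
    exact le_max_left _ _
  · gcongr
    exact (le_mul_of_one_le_left hQ hC).trans (by gcongr; exact le_max_right _ _)

end LogisticLotkaVolterra

theorem logistic_means_relax_to_equilibrium_means_general
    (α β γ δ K ν μ χ θ c1l c1u c2l c2u : ℝ)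
    (hα : 0 < α) (hβ : 0 < β) (hγ : 0 < γ) (hK : 0 < K)
    (hδeq : δ = γ * μ - ν)
    (m1 m2 : ℝ → ℝ)
    (hc1l : 0 < c1l) (hc2l : 0 < c2l)
    (hm1b : ∀ t : ℝ, 0 ≤ t → c1l ≤ m1 t ∧ m1 t ≤ c1u)
    (hm2b : ∀ t : ℝ, 0 ≤ t → c2l ≤ m2 t ∧ m2 t ≤ c2u)
    (hd1 : 0 < β * c2l + α / K * c1l + α * χ)
    (hd2 : 0 < γ * (μ - c1u) + ν * θ) :
    (∀ t : ℝ, 0 ≤ t →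
      max |m1 t - α * (χ + 1) * m1 t / (β * m2 t + α / K * m1 t + α * χ)|
          |m2 t - ν * (θ + 1) * m2 t / (γ * (μ - m1 t) + ν * θ)| ≤
        (β * K + α) / (β * K) *
          max (β * c1u / (β * c2l + α / K * c1l + α * χ))
              (γ * c2u / (γ * (μ - c1u) + ν * θ)) *
          max |m1 t - δ / γ| |m2 t - α * (γ * K - δ) / (β * γ * K)|) ∧
    (Filter.Tendsto m1 Filter.atTop (nhds (δ / γ)) →
     Filter.Tendsto m2 Filter.atTop (nhds (α * (γ * K - δ) / (β * γ * K))) →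
     Filter.Tendsto
       (fun t : ℝ =>
         max |m1 t - α * (χ + 1) * m1 t / (β * m2 t + α / K * m1 t + α * χ)|
             |m2 t - ν * (θ + 1) * m2 t / (γ * (μ - m1 t) + ν * θ)|)
       Filter.atTop (nhds 0)) := by
  have key := fun t ht ↦
    max_abs_sub_gammaEq_le hα hβ hγ hK hδeq hc1l hc2l (hm1b t ht) (hm2b t ht) hd1 hd2
  refine ⟨key, fun h1 h2 ↦ ?_⟩
  refine squeeze_zero' (Eventually.of_forall fun t ↦ (abs_nonneg _).trans (le_max_left _ _))
    ((eventually_ge_atTop 0).mono key) ?_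
  simpa using (tendsto_max_abs_sub_nhds_zero h1 h2).const_mul _

/-- Relative convergence estimate between the means of the logistic
Lotka–Volterra system and the means of the local Gamma equilibria; in particular
convergence of the means to the coexistence equilibrium implies relaxation of
`(m1, m2)` toward `(m1^eq, m2^eq)`. -/
theorem logistic_means_relax_to_equilibrium_means
    (α β γ δ K ν μ χ θ c1l c1u c2l c2u : ℝ)
    (hα : 0 < α) (hβ : 0 < β) (hγ : 0 < γ) (hδ : 0 < δ) (hK : 0 < K) (hν : 0 < ν)
    (hμ : 1 ≤ μ) (hδeq : δ = γ * μ - ν) (hKδ : δ < γ * K)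
    (m1 m2 : ℝ → ℝ)
    (hc1l : 0 < c1l) (hc2l : 0 < c2l)
    (hm1b : ∀ t : ℝ, 0 ≤ t → c1l ≤ m1 t ∧ m1 t ≤ c1u)
    (hm2b : ∀ t : ℝ, 0 ≤ t → c2l ≤ m2 t ∧ m2 t ≤ c2u)
    (hd1 : 0 < β * c2l + α / K * c1l + α * χ)
    (hd2 : 0 < γ * (μ - c1u) + ν * θ) :
    (∀ t : ℝ, 0 ≤ t →
      max |m1 t - α * (χ + 1) * m1 t / (β * m2 t + α / K * m1 t + α * χ)|
          |m2 t - ν * (θ + 1) * m2 t / (γ * (μ - m1 t) + ν * θ)| ≤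
        (β * K + α) / (β * K) *
          max (β * c1u / (β * c2l + α / K * c1l + α * χ))
              (γ * c2u / (γ * (μ - c1u) + ν * θ)) *
          max |m1 t - δ / γ| |m2 t - α * (γ * K - δ) / (β * γ * K)|) ∧
    (Filter.Tendsto m1 Filter.atTop (nhds (δ / γ)) →
     Filter.Tendsto m2 Filter.atTop (nhds (α * (γ * K - δ) / (β * γ * K))) →
     Filter.Tendsto
       (fun t : ℝ =>
         max |m1 t - α * (χ + 1) * m1 t / (β * m2 t + α / K * m1 t + α * χ)|
             |m2 t - ν * (θ + 1) * m2 t / (γ * (μ - m1 t) + ν * θ)|)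
       Filter.atTop (nhds 0)) :=
  logistic_means_relax_to_equilibrium_means_general α β γ δ K ν μ χ θ c1l c1u c2l c2u hα hβ hγ hK
    hδeq m1 m2 hc1l hc2l hm1b hm2b hd1 hd2
end

section
/- Let α, β, γ, ν, σ1, σ2, K > 0, μ ≥ 1, χ, θ ∈ ℝ, and let m1, m2 : [0,∞) → ℝ be continuous with 0 ≤ m1(t) ≤ c̄1 and 0 ≤ m2(t) ≤ c̄2. Assume there exist ζ1, ζ2 > 0 with β m2(t) + (α/K) m1(t) + αχ ≥ ζ1 and γ(μ − m1(t)) + νθ ≥ ζ2 for all t. Let v1, v2 be differentiable solutions of v1' = −2(β m2 + (α/K) m1 + αχ) v1 + σ1 m1 (m1 + m2) and v2' = −2(γ(μ − m1) + νθ) v2 + σ2 m1 m2, and let v1^∞, v2^∞ ∈ ℝ be arbitrary constants. Then for all t ≥ 0: |v1(t) − v1^∞| ≤ |v1(0) − v1^∞| e^{−2ζ1 t} + ((β c̄2 + (α/K) c̄1 + α|χ|)/ζ1) · sup_{0≤s≤t} |σ1 m1(s)(m1(s)+m2(s))/(2(β m2(s) + (α/K) m1(s) + αχ)) − v1^∞|,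 and |v2(t) − v2^∞| ≤ |v2(0) − v2^∞| e^{−2ζ2 t} + ((γ(μ + c̄1) + ν|θ|)/ζ2) · sup_{0≤s≤t} |σ2 m1(s) m2(s)/(2(γ(μ − m1(s)) + νθ)) − v2^∞|. -/
/-! Subtracting `v∞`, the equation `v' = -a v + r` becomes the relaxation `w' = -a (w - g)` of
`w = v - v∞` towards `g = r / a - v∞`. Once `|g| ≤ S` on `[0, T]` and `a ≥ ζ > 0`, the barriers
`±(|w 0| e^{-ζ t} + S)` cannot be crossed, since at contact `w'` is below the barrier's slope;
this gives `|w T| ≤ |w 0| e^{-ζ T} + S`. Here `a = 2 (β m2 + (α/K) m1 + αχ)`, resp.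
`a = 2 (γ (μ - m1) + νθ)`, and `ζ = 2 ζ1`, resp. `2 ζ2`; the constants in front of the suprema
dominate `a(0) / ζ ≥ 1`, so they only weaken the bound. -/

open Set Real

theorem IsCompact.le_biSup_of_continuousOn {X α : Type*} [TopologicalSpace X]
    [ConditionallyCompleteLinearOrder α] [TopologicalSpace α] [ClosedIciTopology α]
    {K : Set X} (hK : IsCompact K) {f : X → α} (hf : ContinuousOn f K) {x : X} (hx : x ∈ K) :
    f x ≤ ⨆ y ∈ K, f y :=
  le_ciSup₂ (f := fun y (_ : y ∈ K) => f y)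
    ((hK.bddAbove_image hf).mono (iUnion_subset fun _ => range_subset_iff.2 (mem_image_of_mem f)))
    x hx

theorem le_mul_exp_add_of_hasDerivAt_relaxation {a g w : ℝ → ℝ} {ζ c S T : ℝ} (hζ : 0 < ζ)
    (hc : 0 ≤ c) (hT : 0 ≤ T) (hw : ∀ t ∈ Icc 0 T, HasDerivAt w (-a t * (w t - g t)) t)
    (ha : ∀ t ∈ Icc 0 T, ζ ≤ a t) (hg : ∀ t ∈ Icc 0 T, g t ≤ S) (h0 : w 0 ≤ c + S) :
    w T ≤ c * exp (-ζ * T) + S := by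
  -- the extra `ε` makes the derivative comparison at contact strict
  refine le_of_forall_pos_le_add fun ε hε => ?_
  have hB : ∀ t, HasDerivAt (fun t => c * exp (-ζ * t) + S + ε) (c * (exp (-ζ * t) * -ζ)) t :=
    fun t => ((((hasDerivAt_id t).const_mul (-ζ)).exp.const_mul c).add_const S).add_const ε
      |>.congr_deriv (by simp)
  refine image_le_of_deriv_right_lt_deriv_boundary
    (fun t ht => (hw t ht).continuousAt.continuousWithinAt)
    (fun t ht => (hw t (Ico_subset_Icc_self ht)).hasDerivWithinAt)
    (by simpa using h0.trans (le_add_of_nonneg_right hε.le)) hB ?_ ⟨hT, le_rfl⟩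
  intro t ht hwt
  have ht' := Ico_subset_Icc_self ht
  have hgap : c * exp (-ζ * t) + ε ≤ w t - g t := by linarith [hg t ht']
  have hgap_nonneg : 0 ≤ w t - g t := le_trans (by positivity) hgap
  calc -a t * (w t - g t) ≤ -ζ * (w t - g t) := by nlinarith [ha t ht']
    _ ≤ -ζ * (c * exp (-ζ * t) + ε) := by nlinarith
    _ < c * (exp (-ζ * t) * -ζ) := by nlinarith

theorem abs_le_mul_exp_add_of_hasDerivAt_relaxation {a g w : ℝ → ℝ} {ζ S T : ℝ} (hζ : 0 < ζ)
    (hT : 0 ≤ T) (hw : ∀ t ∈ Icc 0 T, HasDerivAt w (-a t * (w t - g t)) t)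
    (ha : ∀ t ∈ Icc 0 T, ζ ≤ a t) (hg : ∀ t ∈ Icc 0 T, |g t| ≤ S) :
    |w T| ≤ |w 0| * exp (-ζ * T) + S := by
  have hS : 0 ≤ S := (abs_nonneg _).trans (hg 0 ⟨le_rfl, hT⟩)
  have upper := le_mul_exp_add_of_hasDerivAt_relaxation hζ (abs_nonneg (w 0)) hT hw ha
    (fun t ht => (le_abs_self _).trans (hg t ht)) (by linarith [le_abs_self (w 0)])
  have lower := le_mul_exp_add_of_hasDerivAt_relaxation (w := -w) (g := -g) hζ
    (abs_nonneg (w 0)) hT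
    (fun t ht => (hw t ht).neg.congr_deriv (by simp only [Pi.neg_apply]; ring)) ha
    (fun t ht => (neg_le_abs _).trans (hg t ht))
    (by simp only [Pi.neg_apply]; linarith [neg_le_abs (w 0)])
  simp only [Pi.neg_apply] at lower
  exact abs_le.2 ⟨by linarith, upper⟩

theorem abs_sub_le_of_hasDerivAt_linear {a r v : ℝ → ℝ} {ζ vinf T : ℝ} (hζ : 0 < ζ)
    (hT : 0 ≤ T) (ha_cont : ContinuousOn a (Icc 0 T)) (hr : ContinuousOn r (Icc 0 T))
    (ha : ∀ t ∈ Icc 0 T, ζ ≤ a t) (hv : ∀ t ∈ Icc 0 T, HasDerivAt v (-a t * v t + r t) t) :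
    |v T - vinf| ≤ |v 0 - vinf| * exp (-ζ * T) + ⨆ s ∈ Icc 0 T, |r s / a s - vinf| := by
  have ha_ne : ∀ t ∈ Icc 0 T, a t ≠ 0 := fun t ht => (hζ.trans_le (ha t ht)).ne'
  refine abs_le_mul_exp_add_of_hasDerivAt_relaxation (w := fun t => v t - vinf)
    (g := fun t => r t / a t - vinf) hζ hT
    (fun t ht => ((hv t ht).sub_const vinf).congr_deriv ?_) ha fun t ht =>
      isCompact_Icc.le_biSup_of_continuousOn ((hr.div ha_cont ha_ne).sub continuousOn_const).abs ht
  field_simp [ha_ne t ht]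
  ring

theorem abs_sub_le_of_hasDerivAt_neg_two_mul {b r v : ℝ → ℝ} {ζ A vinf T : ℝ} (hζ : 0 < ζ)
    (hT : 0 ≤ T) (hb_cont : ContinuousOn b (Icc 0 T)) (hr : ContinuousOn r (Icc 0 T))
    (hb : ∀ t ∈ Icc 0 T, ζ ≤ b t) (hA : b 0 ≤ A)
    (hv : ∀ t ∈ Icc 0 T, HasDerivAt v (-2 * b t * v t + r t) t) :
    |v T - vinf| ≤ |v 0 - vinf| * exp (-2 * ζ * T) +
      A / ζ * ⨆ s ∈ Icc 0 T, |r s / (2 * b s) - vinf| := by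
  have hS : 0 ≤ ⨆ s ∈ Icc 0 T, |r s / (2 * b s) - vinf| :=
    Real.iSup_nonneg fun _ => Real.iSup_nonneg fun _ => abs_nonneg _
  have hAζ : 1 ≤ A / ζ := (one_le_div hζ).2 ((hb 0 ⟨le_rfl, hT⟩).trans hA)
  calc |v T - vinf|
      ≤ |v 0 - vinf| * exp (-(2 * ζ) * T) + ⨆ s ∈ Icc 0 T, |r s / (2 * b s) - vinf| :=
        abs_sub_le_of_hasDerivAt_linear (a := fun t => 2 * b t) (by positivity) hT
          (continuousOn_const.mul hb_cont) hr (fun t ht => by linarith [hb t ht])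
          fun t ht => by simpa only [neg_mul] using hv t ht
    _ ≤ _ := by rw [neg_mul, neg_mul, neg_mul]; gcongr; exact le_mul_of_one_le_left hS hAζ

theorem logistic_variance_gronwall_bounds_general
    (α β γ ν σ1 σ2 K μ χ θ c1u c2u ζ1 ζ2 v1inf v2inf : ℝ)
    (hα : 0 < α) (hβ : 0 < β) (hγ : 0 < γ) (hν : 0 < ν)
    (hK : 0 < K)
    (m1 m2 v1 v2 : ℝ → ℝ)
    (hm1c : ContinuousOn m1 (Set.Ici 0)) (hm2c : ContinuousOn m2 (Set.Ici 0))
    (hm1b : ∀ t : ℝ, 0 ≤ t → 0 ≤ m1 t ∧ m1 t ≤ c1u)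
    (hm2b : ∀ t : ℝ, 0 ≤ t → 0 ≤ m2 t ∧ m2 t ≤ c2u)
    (hζ1 : 0 < ζ1) (hζ2 : 0 < ζ2)
    (hlb1 : ∀ t : ℝ, 0 ≤ t → ζ1 ≤ β * m2 t + α / K * m1 t + α * χ)
    (hlb2 : ∀ t : ℝ, 0 ≤ t → ζ2 ≤ γ * (μ - m1 t) + ν * θ)
    (hv1 : ∀ t : ℝ, 0 ≤ t →
      HasDerivAt v1 (-2 * (β * m2 t + α / K * m1 t + α * χ) * v1 t +
        σ1 * m1 t * (m1 t + m2 t)) t)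
    (hv2 : ∀ t : ℝ, 0 ≤ t →
      HasDerivAt v2 (-2 * (γ * (μ - m1 t) + ν * θ) * v2 t + σ2 * m1 t * m2 t) t) :
    ∀ t : ℝ, 0 ≤ t →
      |v1 t - v1inf| ≤ |v1 0 - v1inf| * Real.exp (-2 * ζ1 * t) +
        (β * c2u + α / K * c1u + α * |χ|) / ζ1 *
          ⨆ s ∈ Set.Icc (0:ℝ) t,
            |σ1 * m1 s * (m1 s + m2 s) /
                (2 * (β * m2 s + α / K * m1 s + α * χ)) - v1inf| ∧
      |v2 t - v2inf| ≤ |v2 0 - v2inf| * Real.exp (-2 * ζ2 * t) +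
        (γ * (μ + c1u) + ν * |θ|) / ζ2 *
          ⨆ s ∈ Set.Icc (0:ℝ) t,
            |σ2 * m1 s * m2 s / (2 * (γ * (μ - m1 s) + ν * θ)) - v2inf| := by
  intro t ht
  have hm1 : ContinuousOn m1 (Icc 0 t) := hm1c.mono Icc_subset_Ici_self
  have hm2 : ContinuousOn m2 (Icc 0 t) := hm2c.mono Icc_subset_Ici_self
  obtain ⟨hm1_nonneg, hm1_le⟩ := hm1b 0 le_rfl
  have hm2_le := (hm2b 0 le_rfl).2
  constructor
  · refine abs_sub_le_of_hasDerivAt_neg_two_mul (b := fun s => β * m2 s + α / K * m1 s + α * χ)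
      hζ1 ht (by fun_prop) (by fun_prop) (fun s hs => hlb1 s hs.1) ?_ fun s hs => hv1 s hs.1
    gcongr
    exact le_abs_self χ
  · refine abs_sub_le_of_hasDerivAt_neg_two_mul (b := fun s => γ * (μ - m1 s) + ν * θ)
      hζ2 ht (by fun_prop) (by fun_prop) (fun s hs => hlb2 s hs.1) ?_ fun s hs => hv2 s hs.1
    gcongr
    · linarith
    · exact le_abs_self θ

/-- Gronwall-type bounds for the distance of the variances of the
logistic Fokker–Planck model from arbitrary constants `v1^∞`, `v2^∞`. -/
theorem logistic_variance_gronwall_bounds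
    (α β γ ν σ1 σ2 K μ χ θ c1u c2u ζ1 ζ2 v1inf v2inf : ℝ)
    (hα : 0 < α) (hβ : 0 < β) (hγ : 0 < γ) (hν : 0 < ν)
    (hσ1 : 0 < σ1) (hσ2 : 0 < σ2) (hK : 0 < K) (hμ : 1 ≤ μ)
    (m1 m2 v1 v2 : ℝ → ℝ)
    (hm1c : ContinuousOn m1 (Set.Ici 0)) (hm2c : ContinuousOn m2 (Set.Ici 0))
    (hm1b : ∀ t : ℝ, 0 ≤ t → 0 ≤ m1 t ∧ m1 t ≤ c1u)
    (hm2b : ∀ t : ℝ, 0 ≤ t → 0 ≤ m2 t ∧ m2 t ≤ c2u)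
    (hζ1 : 0 < ζ1) (hζ2 : 0 < ζ2)
    (hlb1 : ∀ t : ℝ, 0 ≤ t → ζ1 ≤ β * m2 t + α / K * m1 t + α * χ)
    (hlb2 : ∀ t : ℝ, 0 ≤ t → ζ2 ≤ γ * (μ - m1 t) + ν * θ)
    (hv1 : ∀ t : ℝ, 0 ≤ t →
      HasDerivAt v1 (-2 * (β * m2 t + α / K * m1 t + α * χ) * v1 t +
        σ1 * m1 t * (m1 t + m2 t)) t)
    (hv2 : ∀ t : ℝ, 0 ≤ t →
      HasDerivAt v2 (-2 * (γ * (μ - m1 t) + ν * θ) * v2 t + σ2 * m1 t * m2 t) t) :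
    ∀ t : ℝ, 0 ≤ t →
      |v1 t - v1inf| ≤ |v1 0 - v1inf| * Real.exp (-2 * ζ1 * t) +
        (β * c2u + α / K * c1u + α * |χ|) / ζ1 *
          ⨆ s ∈ Set.Icc (0:ℝ) t,
            |σ1 * m1 s * (m1 s + m2 s) /
                (2 * (β * m2 s + α / K * m1 s + α * χ)) - v1inf| ∧
      |v2 t - v2inf| ≤ |v2 0 - v2inf| * Real.exp (-2 * ζ2 * t) +
        (γ * (μ + c1u) + ν * |θ|) / ζ2 *
          ⨆ s ∈ Set.Icc (0:ℝ) t,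
            |σ2 * m1 s * m2 s / (2 * (γ * (μ - m1 s) + ν * θ)) - v2inf| :=
  logistic_variance_gronwall_bounds_general α β γ ν σ1 σ2 K μ χ θ c1u c2u ζ1 ζ2 v1inf v2inf hα hβ hγ
    hν hK m1 m2 v1 v2 hm1c hm2c hm1b hm2b hζ1 hζ2 hlb1 hlb2 hv1 hv2
end

section
/- Let α, β, γ, δ, ν, σ1, σ2, K > 0, μ ≥ 1 with δ = γμ − ν and γK > δ, and let χ, θ ∈ ℝ. Let m1, m2 : [0,∞) → ℝ be continuous and bounded with m1(t) → m1^∞ = δ/γ and m2(t) → m2^∞ = α(γK − δ)/(βγK) as t → ∞, and assume there exist ζ1, ζ2 > 0 with β m2(t) + (α/K) m1(t) + αχ ≥ ζ1 and γ(μ − m1(t)) + νθ ≥ ζ2 for all t. Let v1, v2 be differentiable solutions of v1' = −2(β m2 + (α/K) m1 + αχ) v1 + σ1 m1 (m1 + m2) and v2' = −2(γ(μ − m1) + νθ) v2 + σ2 m1 m2. Then v1(t) → v1^∞ = σ1 m1^∞ (m1^∞ + m2^∞)/(2(β m2^∞ + (α/K) m1^∞ + αχ)) and v2(t) → v2^∞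 = σ2 m1^∞ m2^∞/(2(γ(μ − m1^∞) + νθ)) as t → ∞. -/
/-!
Each variance equation is a scalar linear equation `v' = -a v + b` whose coefficients converge,
`a → a₀`, `b → b₀`, with `a` bounded below by some `ζ > 0`. The deviation `w = v - b₀ / a₀`
solves `w' = -a w + r` with `r → 0`, and Young's inequality `2 r w ≤ ζ w² + r² / ζ` gives
`(w²)' ≤ -ζ w² + r² / ζ`. By Grönwall's inequality, once `r² ≤ ρ` the square `w²` is eventually
below any bound exceeding `ρ / ζ²`; letting `ρ → 0` gives `v → b₀ / a₀`.
-/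

open Filter Topology

theorem tendsto_gronwallBound_atTop_of_neg {δ K ε : ℝ} (hK : K < 0) :
    Tendsto (gronwallBound δ K ε) atTop (𝓝 (-(ε / K))) := by
  rw [gronwallBound_of_K_ne_0 hK.ne]
  have hexp : Tendsto (fun x => Real.exp (K * x)) atTop (𝓝 0) :=
    Real.tendsto_exp_atBot.comp (tendsto_id.const_mul_atTop_of_neg hK)
  convert (hexp.const_mul δ).add ((hexp.sub_const 1).const_mul (ε / K)) using 2
  ring

theorem sq_le_gronwallBound_of_hasDerivAt {w a r : ℝ → ℝ} {ζ ρ T : ℝ} (hζ : 0 < ζ)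
    (hw : ∀ t, T ≤ t → HasDerivAt w (-(a t) * w t + r t) t)
    (ha : ∀ t, T ≤ t → ζ ≤ a t) (hr : ∀ t, T ≤ t → r t ^ 2 ≤ ρ) :
    ∀ t, T ≤ t → w t ^ 2 ≤ gronwallBound (w T ^ 2) (-ζ) (ρ / ζ) (t - T) := by
  have hsq : ∀ t, T ≤ t → HasDerivAt (fun s => w s ^ 2) (2 * w t * (-(a t) * w t + r t)) t :=
    fun t ht => ((hw t ht).pow 2).congr_deriv (by ring)
  intro t ht
  refine le_gronwallBound_of_liminf_deriv_right_le (f := fun s => w s ^ 2)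
    (f' := fun s => 2 * w s * (-(a s) * w s + r s)) (b := t) ?_ ?_ le_rfl ?_ t ⟨ht, le_rfl⟩
  · exact fun s hs => (hsq s hs.1).continuousAt.continuousWithinAt
  · exact fun s hs _ hlt => (hsq s hs.1).hasDerivWithinAt.liminf_right_slope_le hlt
  · intro s ⟨hs, _⟩
    have hdiss : ζ * w s ^ 2 ≤ a s * w s ^ 2 := by gcongr; exact ha s hs
    have hyoung : 2 * r s * w s ≤ ζ * w s ^ 2 + r s ^ 2 / ζ := by
      have : ζ * w s ^ 2 + r s ^ 2 / ζ - 2 * r s * w s = (ζ * w s - r s) ^ 2 / ζ := by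
        field_simp; ring
      linarith [div_nonneg (sq_nonneg (ζ * w s - r s)) hζ.le]
    have hforce : r s ^ 2 / ζ ≤ ρ / ζ := by gcongr; exact hr s hs
    linarith

theorem tendsto_zero_of_hasDerivAt_neg_mul_add {w a r : ℝ → ℝ} {ζ : ℝ} (hζ : 0 < ζ)
    (hw : ∀ᶠ t in atTop, HasDerivAt w (-(a t) * w t + r t) t)
    (ha : ∀ᶠ t in atTop, ζ ≤ a t) (hr : Tendsto r atTop (𝓝 0)) :
    Tendsto w atTop (𝓝 0) := by
  suffices hsq : Tendsto (fun t => w t ^ 2) atTop (𝓝 0) by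
    rw [tendsto_zero_iff_abs_tendsto_zero]
    simpa [Function.comp_def, Real.sqrt_sq_eq_abs] using hsq.sqrt
  refine tendsto_order.2 ⟨fun ε hε => Eventually.of_forall fun t => hε.trans_le (sq_nonneg _),
    fun ε hε => ?_⟩
  set ρ := ε * ζ ^ 2 / 2 with hρ
  have hr2 : ∀ᶠ t in atTop, r t ^ 2 ≤ ρ := by
    have := hr.pow 2
    rw [zero_pow two_ne_zero] at this
    exact this.eventually (ge_mem_nhds (by positivity))
  obtain ⟨T, hT⟩ := (hw.and (ha.and hr2)).exists_forall_of_atTop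
  have hbound := sq_le_gronwallBound_of_hasDerivAt hζ (fun t ht => (hT t ht).1)
    (fun t ht => (hT t ht).2.1) (fun t ht => (hT t ht).2.2)
  have hlim : Tendsto (fun t => gronwallBound (w T ^ 2) (-ζ) (ρ / ζ) (t - T)) atTop
      (𝓝 (ε / 2)) := by
    have := (tendsto_gronwallBound_atTop_of_neg (δ := w T ^ 2) (ε := ρ / ζ)
      (neg_lt_zero.2 hζ)).comp (tendsto_atTop_add_const_right atTop (-T) tendsto_id)
    convert this using 2
    · simp [sub_eq_add_neg]
    · rw [hρ]
      field_simp
  filter_upwards [eventually_ge_atTop T, hlim.eventually (gt_mem_nhds (half_lt_self hε))]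
    with t ht hlt
  exact (hbound t ht).trans_lt hlt

theorem tendsto_div_of_hasDerivAt_neg_mul_add {v a b : ℝ → ℝ} {ζ a₀ b₀ : ℝ} (hζ : 0 < ζ)
    (hv : ∀ᶠ t in atTop, HasDerivAt v (-(a t) * v t + b t) t)
    (ha : ∀ᶠ t in atTop, ζ ≤ a t)
    (ha₀ : Tendsto a atTop (𝓝 a₀)) (hb₀ : Tendsto b atTop (𝓝 b₀)) :
    Tendsto v atTop (𝓝 (b₀ / a₀)) := by
  have ha₀_pos : 0 < a₀ := hζ.trans_le (ge_of_tendsto ha₀ ha)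
  have hw := tendsto_zero_of_hasDerivAt_neg_mul_add (w := fun t => v t - b₀ / a₀)
    (r := fun t => b t - a t * (b₀ / a₀)) hζ ?_ ha ?_
  · simpa using hw.add_const (b₀ / a₀)
  · filter_upwards [hv] with t ht
    exact (ht.sub_const _).congr_deriv (by ring)
  · simpa [mul_div_cancel₀ _ ha₀_pos.ne'] using hb₀.sub (ha₀.mul_const (b₀ / a₀))

theorem logistic_variances_converge_to_equilibrium_general
    (α β γ δ ν σ1 σ2 K μ χ θ ζ1 ζ2 : ℝ)
    (m1 m2 v1 v2 : ℝ → ℝ)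
    (hm1lim : Filter.Tendsto m1 Filter.atTop (nhds (δ / γ)))
    (hm2lim : Filter.Tendsto m2 Filter.atTop (nhds (α * (γ * K - δ) / (β * γ * K))))
    (hζ1 : 0 < ζ1) (hζ2 : 0 < ζ2)
    (hlb1 : ∀ t : ℝ, 0 ≤ t → ζ1 ≤ β * m2 t + α / K * m1 t + α * χ)
    (hlb2 : ∀ t : ℝ, 0 ≤ t → ζ2 ≤ γ * (μ - m1 t) + ν * θ)
    (hv1 : ∀ t : ℝ, 0 ≤ t →
      HasDerivAt v1 (-2 * (β * m2 t + α / K * m1 t + α * χ) * v1 t +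
        σ1 * m1 t * (m1 t + m2 t)) t)
    (hv2 : ∀ t : ℝ, 0 ≤ t →
      HasDerivAt v2 (-2 * (γ * (μ - m1 t) + ν * θ) * v2 t + σ2 * m1 t * m2 t) t) :
    Filter.Tendsto v1 Filter.atTop
      (nhds (σ1 * (δ / γ) * (δ / γ + α * (γ * K - δ) / (β * γ * K)) /
        (2 * (β * (α * (γ * K - δ) / (β * γ * K)) + α / K * (δ / γ) + α * χ)))) ∧
    Filter.Tendsto v2 Filter.atTop
      (nhds (σ2 * (δ / γ) * (α * (γ * K - δ) / (β * γ * K)) /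
        (2 * (γ * (μ - δ / γ) + ν * θ)))) := by
  have hA1 :=
    (((hm2lim.const_mul β).add (hm1lim.const_mul (α / K))).add_const (α * χ)).const_mul 2
  have hB1 := (hm1lim.const_mul σ1).mul (hm1lim.add hm2lim)
  have hA2 := (((hm1lim.const_sub μ).const_mul γ).add_const (ν * θ)).const_mul 2
  have hB2 := (hm1lim.const_mul σ2).mul hm2lim
  exact ⟨tendsto_div_of_hasDerivAt_neg_mul_add (mul_pos two_pos hζ1)
      ((eventually_ge_atTop 0).mono fun t ht => (hv1 t ht).congr_deriv (by ring))
      ((eventually_ge_atTop 0).mono fun t ht => by linarith [hlb1 t ht]) hA1 hB1,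
    tendsto_div_of_hasDerivAt_neg_mul_add (mul_pos two_pos hζ2)
      ((eventually_ge_atTop 0).mono fun t ht => (hv2 t ht).congr_deriv (by ring))
      ((eventually_ge_atTop 0).mono fun t ht => by linarith [hlb2 t ht]) hA2 hB2⟩

/-- Global asymptotic stability of the equilibrium variances
`(v1^∞, v2^∞)` for the variance system of the logistic Fokker–Planck model. -/
theorem logistic_variances_converge_to_equilibrium
    (α β γ δ ν σ1 σ2 K μ χ θ ζ1 ζ2 : ℝ)
    (hα : 0 < α) (hβ : 0 < β) (hγ : 0 < γ) (hδ : 0 < δ) (hν : 0 < ν)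
    (hσ1 : 0 < σ1) (hσ2 : 0 < σ2) (hK : 0 < K) (hμ : 1 ≤ μ)
    (hδeq : δ = γ * μ - ν) (hKδ : δ < γ * K)
    (m1 m2 v1 v2 : ℝ → ℝ)
    (hm1c : ContinuousOn m1 (Set.Ici 0)) (hm2c : ContinuousOn m2 (Set.Ici 0))
    (hbdd : ∃ C : ℝ, ∀ t : ℝ, 0 ≤ t → |m1 t| ≤ C ∧ |m2 t| ≤ C)
    (hm1lim : Filter.Tendsto m1 Filter.atTop (nhds (δ / γ)))
    (hm2lim : Filter.Tendsto m2 Filter.atTop (nhds (α * (γ * K - δ) / (β * γ * K))))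
    (hζ1 : 0 < ζ1) (hζ2 : 0 < ζ2)
    (hlb1 : ∀ t : ℝ, 0 ≤ t → ζ1 ≤ β * m2 t + α / K * m1 t + α * χ)
    (hlb2 : ∀ t : ℝ, 0 ≤ t → ζ2 ≤ γ * (μ - m1 t) + ν * θ)
    (hv1 : ∀ t : ℝ, 0 ≤ t →
      HasDerivAt v1 (-2 * (β * m2 t + α / K * m1 t + α * χ) * v1 t +
        σ1 * m1 t * (m1 t + m2 t)) t)
    (hv2 : ∀ t : ℝ, 0 ≤ t →
      HasDerivAt v2 (-2 * (γ * (μ - m1 t) + ν * θ) * v2 t + σ2 * m1 t * m2 t) t) :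
    Filter.Tendsto v1 Filter.atTop
      (nhds (σ1 * (δ / γ) * (δ / γ + α * (γ * K - δ) / (β * γ * K)) /
        (2 * (β * (α * (γ * K - δ) / (β * γ * K)) + α / K * (δ / γ) + α * χ)))) ∧
    Filter.Tendsto v2 Filter.atTop
      (nhds (σ2 * (δ / γ) * (α * (γ * K - δ) / (β * γ * K)) /
        (2 * (γ * (μ - δ / γ) + ν * θ)))) :=
  logistic_variances_converge_to_equilibrium_general α β γ δ ν σ1 σ2 K μ χ θ ζ1 ζ2 m1 m2 v1 v2
    hm1lim hm2lim hζ1 hζ2 hlb1 hlb2 hv1 hv2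
end
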